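/- Suppose the positive-weight quadrature rule {(w_j, x_j)}_{j=1}^m on S^d satisfies the Marcinkiewicz–Zygmund property with constant η ∈ [0,1) for degree n. Then for every χ ∈ P_n(S^d), ‖U_n χ − χ‖²_{L²} ≤ (η² + 4η) ‖χ‖²_{L²}. -/

import Mathlib

open MeasureTheory

noncomputable section

/-- `Z(d,ℓ) = (2ℓ+d−1)·Γ(ℓ+d−1)/(Γ(d)·Γ(ℓ+1))`, the number of linearly independent
real spherical harmonics of exact degree `ℓ` on `S^d`. -/
def Zdim (d ℓ : ℕ) : ℕ :=
  (2 * ℓ + d - 1) * Nat.factorial (ℓ + d - 2) / (Nat.factorial (d - 1) * Nat.factorial ℓ)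

/-- The unit sphere `S^d = {x ∈ ℝ^{d+1} : ‖x‖₂ = 1}`. -/
abbrev Sph (d : ℕ) : Type :=
  Metric.sphere (0 : EuclideanSpace ℝ (Fin (d + 1))) 1

/-- The surface measure `ω_d` on `S^d`: the `d`-dimensional Hausdorff measure. -/
def sphMeasure (d : ℕ) : Measure (Sph d) :=
  MeasureTheory.Measure.hausdorffMeasure (d : ℝ)

/-- The surface area `|S^d| = ∫_{S^d} dω_d`. -/
def surfArea (d : ℕ) : ℝ := (sphMeasure d Set.univ).toReal

/-- `Y : S^d → ℝ` is a spherical harmonic of degree `ℓ`: the restriction to the sphere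
of a harmonic polynomial on `ℝ^{d+1}` which is homogeneous of degree `ℓ`. -/
def IsSphericalHarmonic (d ℓ : ℕ) (Y : Sph d → ℝ) : Prop :=
  ∃ p : MvPolynomial (Fin (d + 1)) ℝ,
    p.IsHomogeneous ℓ ∧
    (∑ i, MvPolynomial.pderiv i (MvPolynomial.pderiv i p)) = 0 ∧
    ∀ x : Sph d, Y x = MvPolynomial.eval (fun i => (x : EuclideanSpace ℝ (Fin (d + 1))) i) p

/-- A complete `L²(ω_d)`-orthonormal system `{Y_{ℓ,k} : k = 1,…,Z(d,ℓ); ℓ = 0,1,2,…}`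
of real spherical harmonics on `S^d`. -/
structure SHSetup (d : ℕ) where
  Y : (ℓ : ℕ) → Fin (Zdim d ℓ) → Sph d → ℝ
  harmonic : ∀ ℓ k, IsSphericalHarmonic d ℓ (Y ℓ k)
  orthonormal : ∀ (ℓ ℓ' : ℕ) (k : Fin (Zdim d ℓ)) (k' : Fin (Zdim d ℓ')),
    ∫ x, Y ℓ k x * Y ℓ' k' x ∂(sphMeasure d) =
      if ℓ = ℓ' ∧ (k : ℕ) = (k' : ℕ) then 1 else 0
  complete : ∀ f : Sph d → ℝ, MemLp f 2 (sphMeasure d) →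
    (∀ ℓ k, ∫ x, f x * Y ℓ k x ∂(sphMeasure d) = 0) → f =ᵐ[sphMeasure d] 0

variable {d : ℕ}

/-- Laplace–Fourier coefficient `f̂_{ℓ,k} = ∫_{S^d} f·Y_{ℓ,k} dω_d`. -/
def coef (S : SHSetup d) (f : Sph d → ℝ) (ℓ : ℕ) (k : Fin (Zdim d ℓ)) : ℝ :=
  ∫ x, f x * S.Y ℓ k x ∂(sphMeasure d)

/-- Membership in `P_n(S^d) = span{Y_{ℓ,k} : ℓ ≤ n}`. -/
def inPn (S : SHSetup d) (n : ℕ) (χ : Sph d → ℝ) : Prop :=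
  ∃ c : (ℓ : ℕ) → Fin (Zdim d ℓ) → ℝ,
    χ = fun x => ∑ ℓ ∈ Finset.range (n + 1), ∑ k, c ℓ k * S.Y ℓ k x

/-- `⟨f,g⟩ = ∫_{S^d} f g dω_d`. -/
def innerL2 (d : ℕ) (f g : Sph d → ℝ) : ℝ := ∫ x, f x * g x ∂(sphMeasure d)

/-- `‖f‖²_{L²}`. -/
def l2NormSq (d : ℕ) (f : Sph d → ℝ) : ℝ := ∫ x, f x ^ 2 ∂(sphMeasure d)

/-- `‖f‖_{L²}`. -/
def l2Norm (d : ℕ) (f : Sph d → ℝ) : ℝ := Real.sqrt (l2NormSq d f)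

/-- `‖f‖_∞ = sup_{x ∈ S^d} |f(x)|`. -/
def supNorm (d : ℕ) (f : Sph d → ℝ) : ℝ := ⨆ x : Sph d, |f x|

/-- The (unfettered) hyperinterpolant
`U_n f = Σ_{ℓ=0}^n Σ_{k} ⟨f, Y_{ℓ,k}⟩_m Y_{ℓ,k}`, where
`⟨f,g⟩_m = Σ_{j=1}^m w_j f(x_j) g(x_j)`. -/
def hyper (S : SHSetup d) (n m : ℕ) (w : Fin m → ℝ) (pts : Fin m → Sph d)
    (f : Sph d → ℝ) : Sph d → ℝ := fun x =>
  ∑ ℓ ∈ Finset.range (n + 1), ∑ k,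
    (∑ j, w j * f (pts j) * S.Y ℓ k (pts j)) * S.Y ℓ k x

/-- Marcinkiewicz–Zygmund property with constant `η` for degree `n`:
`|Σ_j w_j χ(x_j)² − ∫ χ² dω_d| ≤ η ∫ χ² dω_d` for all `χ ∈ P_n(S^d)`. -/
def MZProperty (S : SHSetup d) (n m : ℕ) (w : Fin m → ℝ) (pts : Fin m → Sph d)
    (η : ℝ) : Prop :=
  ∀ χ : Sph d → ℝ, inPn S n χ →
    |∑ j, w j * χ (pts j) ^ 2 - ∫ x, χ x ^ 2 ∂(sphMeasure d)| ≤
      η * ∫ x, χ x ^ 2 ∂(sphMeasure d)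

/-- `E_n(f) = inf_{χ ∈ P_n} ‖f − χ‖_∞`, the best uniform approximation error. -/
def bestUnifErr (S : SHSetup d) (n : ℕ) (f : Sph d → ℝ) : ℝ :=
  sInf {e : ℝ | ∃ χ : Sph d → ℝ, inPn S n χ ∧ e = supNorm d fun x => f x - χ x}

/-- `‖f‖²_{H^s} = Σ_ℓ Σ_k (a_ℓ)⁻¹ |f̂_{ℓ,k}|²`. -/
def sobNormSq (S : SHSetup d) (a : ℕ → ℝ) (f : Sph d → ℝ) : ℝ :=
  ∑' ℓ : ℕ, ∑ k, (a ℓ)⁻¹ * coef S f ℓ k ^ 2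

/-- The Sobolev norm `‖f‖_{H^s}` associated with the normalizing sequence `a`. -/
def sobNorm (S : SHSetup d) (a : ℕ → ℝ) (f : Sph d → ℝ) : ℝ :=
  Real.sqrt (sobNormSq S a f)

/-- Membership in the Sobolev space `H^s(S^d)` (w.r.t. the normalizing sequence `a`). -/
def memHs (S : SHSetup d) (a : ℕ → ℝ) (f : Sph d → ℝ) : Prop :=
  MemLp f 2 (sphMeasure d) ∧ Summable fun ℓ : ℕ => ∑ k, (a ℓ)⁻¹ * coef S f ℓ k ^ 2

/-- The sequence `a` is a valid normalizing sequence for `H^s`: positive and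
`a_ℓ ≍ (1+ℓ)^{−2s}`. -/
def IsNormSeq (s : ℝ) (a : ℕ → ℝ) : Prop :=
  (∀ ℓ, 0 < a ℓ) ∧ ∃ c₁ c₂ : ℝ, 0 < c₁ ∧ 0 < c₂ ∧ ∀ ℓ : ℕ,
    c₁ * (1 + (ℓ : ℝ)) ^ (-(2 * s)) ≤ a ℓ ∧ a ℓ ≤ c₂ * (1 + (ℓ : ℝ)) ^ (-(2 * s))

/-- `x_1,…,x_m` is a QMC design for `H^s(S^d)` with constant `c`:
`|(1/m) Σ_j f(x_j) − ∫ f dω_d| ≤ c·m^{−s/d}·‖f‖_{H^s}` for all `f ∈ H^s(S^d)`. -/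
def IsQMCDesign (S : SHSetup d) (s : ℝ) (a : ℕ → ℝ) (m : ℕ)
    (pts : Fin m → Sph d) (c : ℝ) : Prop :=
  ∀ f : Sph d → ℝ, Continuous f → memHs S a f →
    |(1 / (m : ℝ)) * ∑ j, f (pts j) - ∫ x, f x ∂(sphMeasure d)| ≤
      c * (m : ℝ) ^ (-(s / (d : ℝ))) * sobNorm S a f

/-- The `L²`-orthogonal projection `P_n f = Σ_{ℓ=0}^n Σ_k ⟨f,Y_{ℓ,k}⟩ Y_{ℓ,k}`. -/
def projL2 (S : SHSetup d) (n : ℕ) (f : Sph d → ℝ) : Sph d → ℝ := fun x =>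
  ∑ ℓ ∈ Finset.range (n + 1), ∑ k, coef S f ℓ k * S.Y ℓ k x

/-- `E_n(f; H^s) = inf_{χ ∈ P_n} ‖f − χ‖_{H^s}`. -/
def bestHsErr (S : SHSetup d) (a : ℕ → ℝ) (n : ℕ) (f : Sph d → ℝ) : ℝ :=
  sInf {e : ℝ | ∃ χ : Sph d → ℝ, inPn S n χ ∧ e = sobNorm S a fun x => f x - χ x}

/-!
On `P_n` everything can be computed in Laplace–Fourier coefficients: `∫ χ²` becomes the
coefficient pairing `B`, the quadrature sum becomes a second symmetric form `D`, and the MZ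
property reads `|D(a,a) − B(a,a)| ≤ η B(a,a)`. Polarization upgrades this to
`|D(a,e) − B(a,e)| ≤ (η/2)(B(a,a) + B(e,e))`. The hyperinterpolant of `χ = Σ c_{ℓ,k} Y_{ℓ,k}`
has coefficients `b` with `B(b, ·) = D(c, ·)`, so the error `e = b − c` satisfies
`‖e‖² = D(c,e) − B(c,e) ≤ (η/2)(‖χ‖² + ‖e‖²)`, i.e. `‖e‖² ≤ η/(2−η) ‖χ‖² ≤ η ‖χ‖²`.
-/

open Finset

abbrev SHCoeffs (d : ℕ) : Type := (ℓ : ℕ) → Fin (Zdim d ℓ) → ℝ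

namespace LinearMap.BilinForm

variable {V : Type*} [AddCommGroup V] [Module ℝ V] {B D : LinearMap.BilinForm ℝ V} {η : ℝ}

theorem abs_sub_apply_le_of_abs_sub_apply_self_le (hB : B.IsSymm) (hD : D.IsSymm)
    (h : ∀ x, |D x x - B x x| ≤ η * B x x) (x y : V) :
    |D x y - B x y| ≤ η / 2 * (B x x + B y y) := by
  set E := D - B
  have hE : ∀ z, E z z = D z z - B z z := fun z => rfl
  have hpolar : 4 * E x y = E (x + y) (x + y) - E (x - y) (x - y) := by
    have hsymm : E y x = E x y := (hD.sub hB).eq y x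
    simp only [map_add, map_sub, LinearMap.add_apply, LinearMap.sub_apply]
    linarith
  have hparallel : B (x + y) (x + y) + B (x - y) (x - y) = 2 * (B x x + B y y) := by
    simp only [map_add, map_sub, LinearMap.add_apply, LinearMap.sub_apply]
    ring
  have h4 : |4 * E x y| ≤ η * B (x + y) (x + y) + η * B (x - y) (x - y) := by
    rw [hpolar]
    refine (abs_sub _ _).trans (add_le_add ?_ ?_)
    · rw [hE]; exact h _
    · rw [hE]; exact h _
  have hsum : η * B (x + y) (x + y) + η * B (x - y) (x - y) = 2 * η * (B x x + B y y) := by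
    rw [← mul_add, hparallel]; ring
  rw [abs_mul, abs_of_pos four_pos] at h4
  change |E x y| ≤ _
  linarith

theorem two_sub_mul_apply_sub_le (hB : B.IsSymm) (hD : D.IsSymm)
    (h : ∀ x, |D x x - B x x| ≤ η * B x x) {b c : V} (hb : ∀ z, B b z = D c z) :
    (2 - η) * B (b - c) (b - c) ≤ η * B c c := by
  have herr : B (b - c) (b - c) = D c (b - c) - B c (b - c) := by
    rw [LinearMap.map_sub₂, hb]
  have := le_of_abs_le (abs_sub_apply_le_of_abs_sub_apply_self_le hB hD h c (b - c))
  linarith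

end LinearMap.BilinForm

def coeffPairing (d n : ℕ) : LinearMap.BilinForm ℝ (SHCoeffs d) :=
  LinearMap.mk₂ ℝ (fun a e => ∑ ℓ ∈ range (n + 1), ∑ k, a ℓ k * e ℓ k)
    (fun _ _ _ => by simp only [Pi.add_apply, add_mul, sum_add_distrib])
    (fun _ _ _ => by simp only [Pi.smul_apply, smul_eq_mul, mul_assoc, mul_sum])
    (fun _ _ _ => by simp only [Pi.add_apply, mul_add, sum_add_distrib])
    (fun _ _ _ => by simp only [Pi.smul_apply, smul_eq_mul, mul_left_comm, mul_sum])

theorem coeffPairing_apply (d n : ℕ) (a e : SHCoeffs d) :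
    coeffPairing d n a e = ∑ ℓ ∈ range (n + 1), ∑ k, a ℓ k * e ℓ k := rfl

theorem coeffPairing_isSymm (d n : ℕ) : (coeffPairing d n).IsSymm :=
  ⟨fun a e => by simp only [coeffPairing_apply, mul_comm]⟩

def quadratureForm {X ι : Type*} [Fintype ι] (w : ι → ℝ) (pts : ι → X) :
    LinearMap.BilinForm ℝ (X → ℝ) :=
  LinearMap.mk₂ ℝ (fun f g => ∑ j, w j * f (pts j) * g (pts j))
    (fun _ _ _ => by simp only [Pi.add_apply, mul_add, add_mul, sum_add_distrib])
    (fun _ _ _ => by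
      simp only [Pi.smul_apply, smul_eq_mul, mul_sum]
      exact sum_congr rfl fun _ _ => by ring)
    (fun _ _ _ => by simp only [Pi.add_apply, mul_add, sum_add_distrib])
    (fun _ _ _ => by
      simp only [Pi.smul_apply, smul_eq_mul, mul_sum]
      exact sum_congr rfl fun _ _ => by ring)

theorem quadratureForm_apply {X ι : Type*} [Fintype ι] (w : ι → ℝ) (pts : ι → X)
    (f g : X → ℝ) : quadratureForm w pts f g = ∑ j, w j * f (pts j) * g (pts j) := rfl

theorem quadratureForm_isSymm {X ι : Type*} [Fintype ι] (w : ι → ℝ) (pts : ι → X) :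
    (quadratureForm w pts).IsSymm :=
  ⟨fun f g => by simp only [quadratureForm_apply, mul_right_comm]⟩

namespace SHSetup

variable (S : SHSetup d)

theorem continuous_Y (ℓ : ℕ) (k : Fin (Zdim d ℓ)) : Continuous (S.Y ℓ k) := by
  obtain ⟨p, -, -, hp⟩ := S.harmonic ℓ k
  rw [funext hp]
  exact p.continuous_eval.comp (continuous_pi fun i =>
    (continuous_apply i).comp ((PiLp.continuous_ofLp _ _).comp continuous_subtype_val))

theorem memLp_Y (ℓ : ℕ) (k : Fin (Zdim d ℓ)) : MemLp (S.Y ℓ k) 2 (sphMeasure d) := by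
  refine (memLp_two_iff_integrable_sq (S.continuous_Y ℓ k).aestronglyMeasurable).2 ?_
  by_contra h
  have h1 := S.orthonormal ℓ ℓ k k
  simp only [← sq, integral_undef h, and_self, if_true] at h1
  exact zero_ne_one h1

def harmonicSum (n : ℕ) : SHCoeffs d →ₗ[ℝ] Sph d → ℝ where
  toFun a := ∑ ℓ ∈ range (n + 1), ∑ k, a ℓ k • S.Y ℓ k
  map_add' _ _ := by simp only [Pi.add_apply, add_smul, sum_add_distrib]
  map_smul' _ _ := by
    simp only [Pi.smul_apply, smul_eq_mul, smul_smul, smul_sum, RingHom.id_apply]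

variable {S}

theorem harmonicSum_eq_sum_smul (n : ℕ) (a : SHCoeffs d) :
    S.harmonicSum n a = ∑ ℓ ∈ range (n + 1), ∑ k, a ℓ k • S.Y ℓ k := rfl

theorem harmonicSum_apply (n : ℕ) (a : SHCoeffs d) (x : Sph d) :
    S.harmonicSum n a x = ∑ ℓ ∈ range (n + 1), ∑ k, a ℓ k * S.Y ℓ k x := by
  simp [harmonicSum, Finset.sum_apply]

theorem inPn_harmonicSum (n : ℕ) (a : SHCoeffs d) : inPn S n (S.harmonicSum n a) := by
  unfold inPn
  exact ⟨a, funext (harmonicSum_apply n a)⟩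

theorem memLp_harmonicSum (n : ℕ) (a : SHCoeffs d) :
    MemLp (S.harmonicSum n a) 2 (sphMeasure d) := by
  rw [harmonicSum_eq_sum_smul]
  exact memLp_finsetSum' _ fun ℓ _ => memLp_finsetSum' _ fun k _ => (S.memLp_Y ℓ k).const_smul _

theorem coef_harmonicSum {n ℓ : ℕ} (hℓ : ℓ ≤ n) (k : Fin (Zdim d ℓ)) (e : SHCoeffs d) :
    coef S (S.harmonicSum n e) ℓ k = e ℓ k := by
  have hint (ℓ' : ℕ) (k' : Fin (Zdim d ℓ')) :
      Integrable (fun x => S.Y ℓ' k' x * S.Y ℓ k x) (sphMeasure d) :=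
    (S.memLp_Y ℓ' k').integrable_mul (S.memLp_Y ℓ k)
  have hexpand : (fun x => S.harmonicSum n e x * S.Y ℓ k x) = fun x =>
      ∑ ℓ' ∈ range (n + 1), ∑ k', e ℓ' k' * (S.Y ℓ' k' x * S.Y ℓ k x) := by
    simp only [harmonicSum_apply, sum_mul, mul_assoc]
  rw [coef, hexpand, integral_finsetSum _ fun ℓ' _ =>
    integrable_finsetSum _ fun k' _ => (hint ℓ' k').const_mul _]
  rw [sum_eq_single_of_mem ℓ (mem_range.2 (Nat.lt_succ_of_le hℓ)) fun ℓ' _ hne => ?_]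
  · rw [integral_finsetSum _ fun k' _ => (hint ℓ k').const_mul _,
      Fintype.sum_eq_single k fun k' hne => ?_]
    · simp [integral_const_mul, S.orthonormal]
    · simp [integral_const_mul, S.orthonormal, Fin.val_inj, hne]
  · rw [integral_finsetSum _ fun k' _ => (hint ℓ' k').const_mul _]
    simp [integral_const_mul, S.orthonormal, hne]

theorem integral_harmonicSum_mul (n : ℕ) (a e : SHCoeffs d) :
    ∫ x, S.harmonicSum n a x * S.harmonicSum n e x ∂(sphMeasure d) = coeffPairing d n a e := by
  have hint (ℓ : ℕ) (k : Fin (Zdim d ℓ)) :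
      Integrable (fun x => S.harmonicSum n e x * S.Y ℓ k x) (sphMeasure d) :=
    (memLp_harmonicSum n e).integrable_mul (S.memLp_Y ℓ k)
  have hexpand : (fun x => S.harmonicSum n a x * S.harmonicSum n e x) = fun x =>
      ∑ ℓ ∈ range (n + 1), ∑ k, a ℓ k * (S.harmonicSum n e x * S.Y ℓ k x) := by
    funext x
    simp only [harmonicSum_apply n a, sum_mul]
    exact sum_congr rfl fun _ _ => sum_congr rfl fun _ _ => by ring
  rw [hexpand, integral_finsetSum _ fun ℓ _ =>
    integrable_finsetSum _ fun k _ => (hint ℓ k).const_mul _, coeffPairing_apply]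
  refine sum_congr rfl fun ℓ hℓ => ?_
  rw [integral_finsetSum _ fun k _ => (hint ℓ k).const_mul _]
  refine sum_congr rfl fun k _ => ?_
  rw [integral_const_mul, ← coef, coef_harmonicSum (Nat.lt_succ_iff.1 (mem_range.1 hℓ))]

theorem l2NormSq_harmonicSum (n : ℕ) (a : SHCoeffs d) :
    l2NormSq d (S.harmonicSum n a) = coeffPairing d n a a := by
  simp only [l2NormSq, sq, integral_harmonicSum_mul]

theorem hyper_eq_harmonicSum (n m : ℕ) (w : Fin m → ℝ) (pts : Fin m → Sph d) (f : Sph d → ℝ) :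
    hyper S n m w pts f = S.harmonicSum n fun ℓ k => quadratureForm w pts f (S.Y ℓ k) := by
  funext x
  rw [harmonicSum_apply]
  rfl

theorem quadratureForm_harmonicSum {ι : Type*} [Fintype ι] (w : ι → ℝ) (pts : ι → Sph d)
    (f : Sph d → ℝ) (n : ℕ) (e : SHCoeffs d) :
    quadratureForm w pts f (S.harmonicSum n e) =
      coeffPairing d n (fun ℓ k => quadratureForm w pts f (S.Y ℓ k)) e := by
  simp only [harmonicSum_eq_sum_smul, map_sum, map_smul, smul_eq_mul, coeffPairing_apply,
    mul_comm]

end SHSetup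

namespace MZProperty

variable {S : SHSetup d} {n m : ℕ} {w : Fin m → ℝ} {pts : Fin m → Sph d} {η : ℝ}

theorem abs_sub_coeffPairing_le (hMZ : MZProperty S n m w pts η) (a : SHCoeffs d) :
    |quadratureForm w pts (S.harmonicSum n a) (S.harmonicSum n a) - coeffPairing d n a a| ≤
      η * coeffPairing d n a a := by
  have h := hMZ _ (SHSetup.inPn_harmonicSum n a)
  rw [← l2NormSq, SHSetup.l2NormSq_harmonicSum] at h
  simpa only [quadratureForm_apply, sq, mul_assoc] using h

theorem two_sub_mul_l2NormSq_hyper_sub_le (hMZ : MZProperty S n m w pts η) {χ : Sph d → ℝ}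
    (hχ : inPn S n χ) :
    (2 - η) * l2NormSq d (fun x => hyper S n m w pts χ x - χ x) ≤ η * l2NormSq d χ := by
  obtain ⟨c, hc⟩ := hχ
  replace hc : χ = S.harmonicSum n c := hc.trans (funext (SHSetup.harmonicSum_apply n c)).symm
  set b : SHCoeffs d := fun ℓ k => quadratureForm w pts χ (S.Y ℓ k)
  have herr : (fun x => hyper S n m w pts χ x - χ x) = S.harmonicSum n (b - c) := by
    rw [map_sub, SHSetup.hyper_eq_harmonicSum, ← hc]
    rfl
  let D : LinearMap.BilinForm ℝ (SHCoeffs d) :=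
    (quadratureForm w pts).compl₁₂ (S.harmonicSum n) (S.harmonicSum n)
  have hD : D.IsSymm := ⟨fun a e => (quadratureForm_isSymm w pts).eq _ _⟩
  have hb (z : SHCoeffs d) : coeffPairing d n b z = D c z := by
    rw [LinearMap.compl₁₂_apply, ← hc, SHSetup.quadratureForm_harmonicSum]
  rw [herr, hc, SHSetup.l2NormSq_harmonicSum, SHSetup.l2NormSq_harmonicSum]
  exact LinearMap.BilinForm.two_sub_mul_apply_sub_le (coeffPairing_isSymm d n) hD
    hMZ.abs_sub_coeffPairing_le hb

end MZProperty

theorem statement4_general (d : ℕ) (S : SHSetup d)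
    (n m : ℕ) (w : Fin m → ℝ) (pts : Fin m → Sph d)
    (η : ℝ) (hη0 : 0 ≤ η) (hη1 : η < 1) (hMZ : MZProperty S n m w pts η)
    (χ : Sph d → ℝ) (hχ : inPn S n χ) :
    l2NormSq d (fun x => hyper S n m w pts χ x - χ x) ≤
      (η ^ 2 + 4 * η) * l2NormSq d χ := by
  set err := l2NormSq d fun x => hyper S n m w pts χ x - χ x
  have herr_nonneg : 0 ≤ err := integral_nonneg fun x => sq_nonneg _
  have hχ_nonneg : 0 ≤ l2NormSq d χ := integral_nonneg fun x => sq_nonneg (χ x)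
  calc err ≤ (2 - η) * err := le_mul_of_one_le_left herr_nonneg (by linarith)
    _ ≤ η * l2NormSq d χ := hMZ.two_sub_mul_l2NormSq_hyper_sub_le hχ
    _ ≤ (η ^ 2 + 4 * η) * l2NormSq d χ := by gcongr; nlinarith

/-- Lemma 3.1(c): under the Marcinkiewicz–Zygmund property with
constant `η ∈ [0,1)` for degree `n`, for every `χ ∈ P_n(S^d)` one has
`‖U_n χ − χ‖²_{L²} ≤ (η² + 4η)‖χ‖²_{L²}`. -/
theorem statement4 (d : ℕ) (hd : 2 ≤ d) (S : SHSetup d)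
    (n m : ℕ) (w : Fin m → ℝ) (hw : ∀ j, 0 < w j) (pts : Fin m → Sph d)
    (η : ℝ) (hη0 : 0 ≤ η) (hη1 : η < 1) (hMZ : MZProperty S n m w pts η)
    (χ : Sph d → ℝ) (hχ : inPn S n χ) :
    l2NormSq d (fun x => hyper S n m w pts χ x - χ x) ≤
      (η ^ 2 + 4 * η) * l2NormSq d χ :=
  statement4_general d S n m w pts η hη0 hη1 hMZ χ hχ
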